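/- (Mean of the deformed Heine variable) Let $0<q<1$, $\lambda>0$, and let $X$ follow the Heine distribution with probability function $f_X^H(x)= \frac{q^{\binom{x}{2}}\lambda^x}{[x]_q!}\prod_{i=1}^{\infty}(1+\lambda(1-q)q^{i-1})^{-1}$, $x=0,1,2,\ldots$. Then the mean of the deformed random variable $[X]_{1/q}$ is $E\big([X]_{1/q}\big)=\sum_{x=0}^{\infty}[x]_{1/q}\,f_X^H(x)=\lambda$. -/

import Mathlib

open scoped BigOperators

/-- The `q`-factorial `[n]_q! = ∏_{k=1}^n (1-q^k)/(1-q)`. -/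
noncomputable def qFact (q : ℝ) (n : ℕ) : ℝ :=
  ∏ k ∈ Finset.range n, (1 - q ^ (k + 1)) / (1 - q)

/-- The deformed value `[x]_{1/q} = (q^{-x}-1)/(q^{-1}-1)`. -/
noncomputable def qDef (q : ℝ) (x : ℕ) : ℝ := (q⁻¹ ^ x - 1) / (q⁻¹ - 1)

/-!
Put `c_k(t) = q^{k(k-1)/2} t^k / [k]_q!` and `E(t) = ∑ c_k(t)`. Since `[k+1]_{1/q} q^k = [k+1]_q`,
one has `[k+1]_{1/q} c_{k+1}(λ) = λ c_k(λ)`, so the deformed mean equals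
`λ E(λ) / ∏_{i≥0} (1 + λ(1-q)q^i)`, and it remains to prove Euler's identity
`E(t) = ∏_{i≥0} (1 + t(1-q)q^i)`. Termwise `c_{k+1}(t) - c_{k+1}(qt) = t(1-q) c_k(qt)`, so
`E(t) = (1 + t(1-q)) E(qt)`, hence `E(t) = ∏_{i<n} (1 + t(1-q)q^i) · E(q^n t)`, and
`E(q^n t) → 1` for `t ≥ 0` because `1 ≤ E(st) ≤ 1 + s(E(t) - 1)` for `0 ≤ s ≤ 1`.
-/

open Filter Finset Topology

lemma qFact_succ (q : ℝ) (n : ℕ) : qFact q (n + 1) = qFact q n * ((1 - q ^ (n + 1)) / (1 - q)) :=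
  prod_range_succ _ _

lemma one_sub_pow_succ_pos {q : ℝ} (hq0 : 0 ≤ q) (hq1 : q < 1) (n : ℕ) : 0 < 1 - q ^ (n + 1) :=
  sub_pos.2 (pow_lt_one₀ hq0 hq1 n.succ_ne_zero)

lemma qFact_pos {q : ℝ} (hq0 : 0 ≤ q) (hq1 : q < 1) (n : ℕ) : 0 < qFact q n :=
  prod_pos fun k _ => div_pos (one_sub_pow_succ_pos hq0 hq1 k) (sub_pos.2 hq1)

lemma qDef_succ {q : ℝ} (hq0 : q ≠ 0) (hq1 : q ≠ 1) (n : ℕ) :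
    qDef q (n + 1) = (1 - q ^ (n + 1)) / ((1 - q) * q ^ n) := by
  have : 1 - q ≠ 0 := sub_ne_zero.2 hq1.symm
  rw [qDef, inv_pow]
  field_simp
  ring

noncomputable def heineTerm (q t : ℝ) (k : ℕ) : ℝ := q ^ (k * (k - 1) / 2) * t ^ k / qFact q k

noncomputable def heineSum (q t : ℝ) : ℝ := ∑' k, heineTerm q t k

@[simp]
lemma heineTerm_zero (q t : ℝ) : heineTerm q t 0 = 1 := by simp [heineTerm, qFact]

lemma heineTerm_mul_left (q s t : ℝ) (k : ℕ) : heineTerm q (s * t) k = s ^ k * heineTerm q t k := by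
  simp only [heineTerm, mul_pow]
  ring

lemma heineTerm_succ_mul {q : ℝ} (hq0 : 0 ≤ q) (hq1 : q < 1) (t : ℝ) (k : ℕ) :
    (1 - q ^ (k + 1)) * heineTerm q t (k + 1) = (1 - q) * t * q ^ k * heineTerm q t k := by
  have h1 : 1 - q ≠ 0 := (sub_pos.2 hq1).ne'
  have h2 := (one_sub_pow_succ_pos hq0 hq1 k).ne'
  have h3 := (qFact_pos hq0 hq1 k).ne'
  rw [heineTerm, heineTerm, Nat.triangle_succ, qFact_succ]
  generalize 1 - q ^ (k + 1) = a at h2 ⊢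
  rw [pow_add, pow_succ t]
  field_simp

lemma heineTerm_nonneg {q t : ℝ} (hq0 : 0 ≤ q) (hq1 : q < 1) (ht : 0 ≤ t) (k : ℕ) :
    0 ≤ heineTerm q t k :=
  div_nonneg (mul_nonneg (pow_nonneg hq0 _) (pow_nonneg ht _)) (qFact_pos hq0 hq1 k).le

lemma norm_heineTerm_succ_le {q : ℝ} (hq0 : 0 ≤ q) (hq1 : q < 1) (t : ℝ) (k : ℕ) :
    ‖heineTerm q t (k + 1)‖ ≤ |t| * q ^ k * ‖heineTerm q t k‖ := by
  have hpos := one_sub_pow_succ_pos hq0 hq1 k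
  have hle : 1 - q ≤ 1 - q ^ (k + 1) :=
    sub_le_sub_left (pow_le_of_le_one hq0 hq1.le k.succ_ne_zero) 1
  have key := congrArg norm (heineTerm_succ_mul hq0 hq1 t k)
  simp only [norm_mul, Real.norm_eq_abs, abs_of_pos hpos, abs_of_pos (sub_pos.2 hq1),
    abs_of_nonneg (pow_nonneg hq0 k)] at key ⊢
  refine le_of_mul_le_mul_left ?_ hpos
  have := mul_le_mul_of_nonneg_right hle
    (by positivity : 0 ≤ |t| * q ^ k * |heineTerm q t k|)
  linarith

lemma summable_heineTerm {q : ℝ} (hq0 : 0 ≤ q) (hq1 : q < 1) (t : ℝ) :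
    Summable (heineTerm q t) := by
  have hsmall : ∀ᶠ k : ℕ in atTop, |t| * q ^ k ≤ 1 / 2 := by
    have := (tendsto_pow_atTop_nhds_zero_of_lt_one hq0 hq1).const_mul |t|
    rw [mul_zero] at this
    exact this.eventually (ge_mem_nhds one_half_pos)
  refine summable_of_ratio_norm_eventually_le one_half_lt_one ?_
  filter_upwards [hsmall] with k hk
  exact (norm_heineTerm_succ_le hq0 hq1 t k).trans
    (mul_le_mul_of_nonneg_right hk (norm_nonneg _))

lemma heineSum_eq_one_add {q : ℝ} (hq0 : 0 ≤ q) (hq1 : q < 1) (t : ℝ) :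
    heineSum q t = 1 + ∑' k, heineTerm q t (k + 1) := by
  rw [heineSum, (summable_heineTerm hq0 hq1 t).tsum_eq_zero_add, heineTerm_zero]

lemma one_le_heineSum {q t : ℝ} (hq0 : 0 ≤ q) (hq1 : q < 1) (ht : 0 ≤ t) : 1 ≤ heineSum q t := by
  rw [heineSum_eq_one_add hq0 hq1]
  exact le_add_of_nonneg_right (tsum_nonneg fun k => heineTerm_nonneg hq0 hq1 ht _)

lemma heineSum_eq_mul_heineSum_mul {q : ℝ} (hq0 : 0 ≤ q) (hq1 : q < 1) (t : ℝ) :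
    heineSum q t = (1 + t * (1 - q)) * heineSum q (q * t) := by
  have hsum (s : ℝ) : Summable fun k => heineTerm q s (k + 1) :=
    (summable_nat_add_iff 1).2 (summable_heineTerm hq0 hq1 s)
  have hdiff (k : ℕ) :
      heineTerm q t (k + 1) - heineTerm q (q * t) (k + 1) = t * (1 - q) * heineTerm q (q * t) k := by
    rw [heineTerm_mul_left, heineTerm_mul_left]
    linear_combination heineTerm_succ_mul hq0 hq1 t k
  have hshift : (∑' k, heineTerm q t (k + 1)) - ∑' k, heineTerm q (q * t) (k + 1) =
      t * (1 - q) * heineSum q (q * t) := by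
    rw [← (hsum t).tsum_sub (hsum (q * t)), tsum_congr hdiff, tsum_mul_left]
    rfl
  linear_combination heineSum_eq_one_add hq0 hq1 t - heineSum_eq_one_add hq0 hq1 (q * t) + hshift

lemma heineSum_mul_le {q s t : ℝ} (hq0 : 0 ≤ q) (hq1 : q < 1) (hs0 : 0 ≤ s) (hs1 : s ≤ 1)
    (ht : 0 ≤ t) : heineSum q (s * t) ≤ 1 + s * (heineSum q t - 1) := by
  have hsum (u : ℝ) : Summable fun k => heineTerm q u (k + 1) :=
    (summable_nat_add_iff 1).2 (summable_heineTerm hq0 hq1 u)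
  have hterm (k : ℕ) : heineTerm q (s * t) (k + 1) ≤ s * heineTerm q t (k + 1) := by
    rw [heineTerm_mul_left]
    exact mul_le_mul_of_nonneg_right (pow_le_of_le_one hs0 hs1 k.succ_ne_zero)
      (heineTerm_nonneg hq0 hq1 ht _)
  rw [heineSum_eq_one_add hq0 hq1, heineSum_eq_one_add hq0 hq1, add_sub_cancel_left,
    ← tsum_mul_left]
  exact add_le_add_right ((hsum _).tsum_le_tsum hterm ((hsum t).mul_left s)) 1

lemma tendsto_heineSum_pow_mul {q t : ℝ} (hq0 : 0 ≤ q) (hq1 : q < 1) (ht : 0 ≤ t) :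
    Tendsto (fun n : ℕ => heineSum q (q ^ n * t)) atTop (𝓝 1) := by
  have hpow := tendsto_pow_atTop_nhds_zero_of_lt_one hq0 hq1
  have hupper : Tendsto (fun n : ℕ => 1 + q ^ n * (heineSum q t - 1)) atTop (𝓝 1) := by
    simpa using (hpow.mul_const (heineSum q t - 1)).const_add 1
  exact tendsto_of_tendsto_of_tendsto_of_le_of_le tendsto_const_nhds hupper
    (fun n => one_le_heineSum hq0 hq1 (mul_nonneg (pow_nonneg hq0 n) ht))
    (fun n => heineSum_mul_le hq0 hq1 (pow_nonneg hq0 n) (pow_le_one₀ hq0 hq1.le) ht)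

lemma heineSum_eq_prod_mul {q : ℝ} (hq0 : 0 ≤ q) (hq1 : q < 1) (t : ℝ) (n : ℕ) :
    heineSum q t = (∏ i ∈ range n, (1 + t * (1 - q) * q ^ i)) * heineSum q (q ^ n * t) := by
  induction n with
  | zero => simp
  | succ n ih =>
    rw [ih, heineSum_eq_mul_heineSum_mul hq0 hq1 (q ^ n * t), prod_range_succ, pow_succ]
    ring_nf

theorem tprod_one_add_mul_pow_eq_heineSum {q t : ℝ} (hq0 : 0 ≤ q) (hq1 : q < 1) (ht : 0 ≤ t) :
    ∏' i : ℕ, (1 + t * (1 - q) * q ^ i) = heineSum q t := by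
  have hmul : Multipliable fun i : ℕ => 1 + t * (1 - q) * q ^ i :=
    Real.multipliable_one_add_of_summable ((summable_geometric_of_lt_one hq0 hq1).mul_left _)
  have hlim := hmul.hasProd.tendsto_prod_nat.mul (tendsto_heineSum_pow_mul hq0 hq1 ht)
  rw [mul_one] at hlim
  exact tendsto_nhds_unique hlim
    (tendsto_const_nhds.congr fun n => heineSum_eq_prod_mul hq0 hq1 t n)

lemma qDef_succ_mul_heineTerm_succ {q : ℝ} (hq0 : 0 < q) (hq1 : q < 1) (t : ℝ) (k : ℕ) :
    qDef q (k + 1) * heineTerm q t (k + 1) = t * heineTerm q t k := by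
  have h1 : 1 - q ≠ 0 := (sub_pos.2 hq1).ne'
  have h2 : q ^ k ≠ 0 := pow_ne_zero k hq0.ne'
  rw [qDef_succ hq0.ne' hq1.ne, div_mul_eq_mul_div, heineTerm_succ_mul hq0.le hq1]
  field_simp

lemma tsum_qDef_mul_heineTerm {q : ℝ} (hq0 : 0 < q) (hq1 : q < 1) (t : ℝ) :
    ∑' x, qDef q x * heineTerm q t x = t * heineSum q t := by
  have hshift : Summable fun k => qDef q (k + 1) * heineTerm q t (k + 1) :=
    ((summable_heineTerm hq0.le hq1 t).mul_left t).congr fun k =>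
      (qDef_succ_mul_heineTerm_succ hq0 hq1 t k).symm
  have hqDef0 : qDef q 0 = 0 := by simp [qDef]
  have hsum : Summable fun x => qDef q x * heineTerm q t x := (summable_nat_add_iff 1).1 hshift
  rw [hsum.tsum_eq_zero_add, hqDef0, zero_mul, zero_add,
    tsum_congr (qDef_succ_mul_heineTerm_succ hq0 hq1 t), tsum_mul_left, heineSum]

/-- **Mean of the deformed Heine variable**: `E([X]_{1/q}) = λ`. -/
theorem heine_deformed_mean (q lam : ℝ) (hq0 : 0 < q) (hq1 : q < 1) (hlam : 0 < lam) :
    ∑' x : ℕ,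
      qDef q x * (q ^ (x * (x - 1) / 2) * lam ^ x / qFact q x *
        (∏' i : ℕ, (1 + lam * (1 - q) * q ^ i))⁻¹) = lam := by
  have hnorm := tprod_one_add_mul_pow_eq_heineSum hq0.le hq1 hlam.le
  have hpos : 0 < heineSum q lam := one_pos.trans_le (one_le_heineSum hq0.le hq1 hlam.le)
  change ∑' x : ℕ, qDef q x * (heineTerm q lam x * _) = lam
  simp_rw [hnorm, ← mul_assoc, tsum_mul_right, tsum_qDef_mul_heineTerm hq0 hq1]
  field_simp
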